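/- arXiv:2411.12912 — 3 statements merged into one kernel-verified Lean document; each statement's English description precedes it below -/
import Mathlib

section
/- The algebra B of 2×2 matrices over a field k does not admit a Reedy decomposition: there is no complete set E of pairwise orthogonal idempotents, degree function, and subalgebras B⁺, B⁻ satisfying the Reedy axioms. -/
open scoped TensorProduct DirectSum

/-- The corner subspace `f·S·e` of an algebra `A`, for `S ⊆ A`. -/
def cornerSpace (k : Type*) [Field k] {A : Type*} [Ring A] [Algebra k A]
    (f e : A) (S : Set A) : Submodule k A :=
  Submodule.span k {x | ∃ a ∈ S, x = f * a * e}

/-- Multiplication, as a linear map on the tensor product of two subspaces of an algebra. -/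
noncomputable def mulTensor (k : Type*) [Field k] {A : Type*} [Ring A] [Algebra k A]
    (M N : Submodule k A) : (M ⊗[k] N) →ₗ[k] A :=
  TensorProduct.lift ((LinearMap.mul k A).domRestrict₁₂ M N)

/-- The multiplication map `⊕_l (e_j·P·e_l) ⊗ (e_l·M·e_i) → A`. -/
noncomputable def reedyMulMap (k : Type*) [Field k] {A : Type*} [Ring A] [Algebra k A]
    {ι : Type*} [Fintype ι] [DecidableEq ι]
    (e : ι → A) (P M : Set A) (j i : ι) :
    (⨁ l : ι, (↥(cornerSpace k (e j) (e l) P) ⊗[k] ↥(cornerSpace k (e l) (e i) M))) →ₗ[k] A :=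
  DirectSum.toModule k ι A fun l =>
    mulTensor k (cornerSpace k (e j) (e l) P) (cornerSpace k (e l) (e i) M)

/-- A Reedy algebra structure on `A`: a complete set of pairwise orthogonal idempotents
`e`, a degree function `deg`, and unital subalgebras `Ap = A⁺`, `Am = A⁻` containing the
idempotents, such that the corners of `A⁺` are upward directed and one-dimensional on the
diagonal, the corners of `A⁻` are downward directed and one-dimensional on the diagonal, and
multiplication induces isomorphisms `⊕_l e_j A⁺ e_l ⊗ e_l A⁻ e_i ≅ e_j A e_i`. -/
structure IsReedy (k : Type*) [Field k] {A : Type*} [Ring A] [Algebra k A]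
    {ι : Type*} [Fintype ι] [DecidableEq ι]
    (e : ι → A) (deg : ι → ℕ) (Ap Am : Subalgebra k A) : Prop where
  idem : ∀ i, IsIdempotentElem (e i)
  orth : ∀ i j, i ≠ j → e i * e j = 0
  complete : ∑ i, e i = 1
  memP : ∀ i, e i ∈ Ap
  memM : ∀ i, e i ∈ Am
  diagP : ∀ i, Module.finrank k (cornerSpace k (e i) (e i) (Ap : Set A)) = 1
  offP : ∀ i j, i ≠ j → cornerSpace k (e j) (e i) (Ap : Set A) ≠ ⊥ → deg i < deg j
  diagM : ∀ i, Module.finrank k (cornerSpace k (e i) (e i) (Am : Set A)) = 1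
  offM : ∀ i j, i ≠ j → cornerSpace k (e j) (e i) (Am : Set A) ≠ ⊥ → deg j < deg i
  mul_inj : ∀ i j, Function.Injective (reedyMulMap k e (Ap : Set A) (Am : Set A) j i)
  mul_range : ∀ i j, LinearMap.range (reedyMulMap k e (Ap : Set A) (Am : Set A) j i)
      = cornerSpace k (e j) (e i) Set.univ
/-- The corner `eAe` of an algebra, as a non-unital subalgebra: the set of elements
fixed under left and right multiplication by `e`. -/
def cornerNonUnitalSubalgebra (k : Type*) [Field k] {A : Type*} [Ring A] [Algebra k A]
    (e : A) : NonUnitalSubalgebra k A where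
  carrier := {x | e * x = x ∧ x * e = x}
  add_mem' := fun ha hb => ⟨by rw [mul_add, ha.1, hb.1], by rw [add_mul, ha.2, hb.2]⟩
  zero_mem' := ⟨mul_zero e, zero_mul e⟩
  mul_mem' := fun ha hb => ⟨by rw [← mul_assoc, ha.1], by rw [mul_assoc, hb.2]⟩
  smul_mem' := fun c x hx => ⟨by rw [mul_smul_comm, hx.1], by rw [smul_mul_assoc, hx.2]⟩

/-- The corner ring `eAe` attached to an idempotent `e` of an algebra `A`. -/
def CornerRing (k : Type*) [Field k] {A : Type*} [Ring A] [Algebra k A]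
    (e : {x : A // IsIdempotentElem x}) : Type _ :=
  ↥(cornerNonUnitalSubalgebra k (e : A))

instance CornerRing.instRing (k : Type*) [Field k] {A : Type*} [Ring A] [Algebra k A]
    (e : {x : A // IsIdempotentElem x}) : Ring (CornerRing k e) :=
  { (inferInstance : NonUnitalRing (cornerNonUnitalSubalgebra k (e : A))) with
    one := ⟨(e : A), e.2, e.2⟩
    one_mul := fun x => Subtype.ext x.2.1
    mul_one := fun x => Subtype.ext x.2.2 }

instance CornerRing.instModule (k : Type*) [Field k] {A : Type*} [Ring A] [Algebra k A]
    (e : {x : A // IsIdempotentElem x}) : Module k (CornerRing k e) :=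
  inferInstanceAs (Module k ↥(cornerNonUnitalSubalgebra k (e : A)))

noncomputable instance CornerRing.instAlgebra (k : Type*) [Field k] {A : Type*} [Ring A]
    [Algebra k A] (e : {x : A // IsIdempotentElem x}) : Algebra k (CornerRing k e) :=
  Algebra.ofModule
    (fun c x y => Subtype.ext (smul_mul_assoc c x.1 y.1))
    (fun c x y => Subtype.ext (mul_smul_comm c x.1 y.1))

/-- The element of the corner ring `eAe` underlying `x : A`, given proofs. -/
def CornerRing.mk (k : Type*) [Field k] {A : Type*} [Ring A] [Algebra k A]
    (e : {x : A // IsIdempotentElem x}) (x : A) (h1 : (e : A) * x = x) (h2 : x * (e : A) = x) :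
    CornerRing k e := ⟨x, h1, h2⟩

/-!
Count dimensions. Multiplication identifies `e_j B e_i` with `⊕_l e_j B⁺ e_l ⊗ e_l B⁻ e_i`, so
summing over the Peirce decomposition `B = ⊕_{i,j} e_j B e_i` gives
`dim B = ∑_l dim (B⁺ e_l) · dim (e_l B⁻)`. For `e_a` of minimal degree the degree conditions kill
the corners `e_a B⁺ e_l` and `e_l B⁻ e_a` with `l ≠ a`, so `e_b B e_a = e_b B⁺ e_a` and
`e_a B e_b = e_a B⁻ e_b`. Since `Mat₂(k)` is a prime ring, no corner `e_j B e_i` vanishes. Hence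
a single idempotent forces `dim B = 1`, while a second one `e_b` makes the terms `l = a, b` alone
contribute at least `2 · 2 + 1 = 5 > 4`.
-/

theorem CompleteOrthogonalIdempotents.sum_finrank_range {k V : Type*} [Field k] [AddCommGroup V]
    [Module k V] [FiniteDimensional k V] {I : Type*} [Fintype I] [DecidableEq I]
    {f : I → Module.End k V} (hf : CompleteOrthogonalIdempotents f) :
    ∑ i, Module.finrank k (LinearMap.range (f i)) = Module.finrank k V := by
  have hf_range : ∀ i j, ∀ y ∈ LinearMap.range (f j), f i y = if i = j then y else 0 := by
    rintro i j _ ⟨y, rfl⟩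
    rw [← Module.End.mul_apply, hf.mul_eq]
    split_ifs with hij
    · rw [hij]
    · rfl
  let toPi : V →ₗ[k] ∀ i, LinearMap.range (f i) := LinearMap.pi fun i => (f i).rangeRestrict
  let ofPi : (∀ i, LinearMap.range (f i)) →ₗ[k] V :=
    ∑ i, (LinearMap.range (f i)).subtype ∘ₗ LinearMap.proj i
  let equiv : V ≃ₗ[k] ∀ i, LinearMap.range (f i) := LinearEquiv.ofLinearMap toPi ofPi
    (LinearMap.ext fun v => funext fun i => Subtype.ext <| by
      simp [toPi, ofPi, map_sum, fun j => hf_range i j _ (v j).2])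
    (LinearMap.ext fun x => by
      simp [ofPi, toPi, ← LinearMap.sum_apply, hf.complete])
  rw [equiv.finrank_eq, Module.finrank_pi_fintype]

theorem CompleteOrthogonalIdempotents.mulLeft_mul_mulRight {R A : Type*} [CommSemiring R]
    [Semiring A] [Algebra R A] {ι : Type*} [Fintype ι] {e : ι → A}
    (he : CompleteOrthogonalIdempotents e) :
    CompleteOrthogonalIdempotents
      fun p : ι × ι => LinearMap.mulLeft R (e p.1) * LinearMap.mulRight R (e p.2) where
  idem p := IsIdempotentElem.mul_of_commute (LinearMap.commute_mulLeft_right _ _)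
    (LinearMap.ext fun x => by simp [← mul_assoc, (he.idem p.1).eq])
    (LinearMap.ext fun x => by simp [mul_assoc, (he.idem p.2).eq])
  ortho p q hpq := LinearMap.ext fun x => by
    obtain h1 | h2 : p.1 ≠ q.1 ∨ p.2 ≠ q.2 := by
      contrapose! hpq
      exact Prod.ext hpq.1 hpq.2
    · simp [← mul_assoc, he.ortho h1]
    · simp [mul_assoc, he.ortho h2.symm]
  complete := LinearMap.ext fun x => by
    simp [Fintype.sum_prod_type, LinearMap.sum_apply, ← Finset.mul_sum, ← Finset.sum_mul,
      he.complete]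

section Corner

variable {k : Type*} [Field k] {A : Type*} [Ring A] [Algebra k A]

theorem cornerSpace_univ (f e : A) :
    cornerSpace k f e Set.univ =
      LinearMap.range (LinearMap.mulLeft k f * LinearMap.mulRight k e) := by
  have hset : {x | ∃ a ∈ (Set.univ : Set A), x = f * a * e} =
      LinearMap.range (LinearMap.mulLeft k f * LinearMap.mulRight k e) := by
    ext x
    simp [mul_assoc, eq_comm]
  rw [cornerSpace, hset, Submodule.span_eq]

theorem sum_finrank_cornerSpace_univ [FiniteDimensional k A] {ι : Type*} [Fintype ι]
    {e : ι → A} (he : CompleteOrthogonalIdempotents e) :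
    ∑ p : ι × ι, Module.finrank k (cornerSpace k (e p.1) (e p.2) Set.univ) =
      Module.finrank k A := by
  classical
  rw [← (he.mulLeft_mul_mulRight (R := k)).sum_finrank_range]
  exact Finset.sum_congr rfl fun p _ => by rw [cornerSpace_univ]

end Corner

theorem Matrix.exists_mul_mul_ne_zero {R : Type*} [Semiring R] [NoZeroDivisors R]
    {l m n o : Type*} [Fintype m] [Fintype n] [DecidableEq m] [DecidableEq n]
    {M : Matrix l m R} {N : Matrix n o R} (hM : M ≠ 0) (hN : N ≠ 0) :
    ∃ X : Matrix m n R, M * X * N ≠ 0 := by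
  obtain ⟨a, b, hab⟩ : ∃ a b, M a b ≠ 0 := by simpa [← Matrix.ext_iff] using hM
  obtain ⟨c, d, hcd⟩ : ∃ c d, N c d ≠ 0 := by simpa [← Matrix.ext_iff] using hN
  have hentry : (M * Matrix.single b c (1 : R) * N) a d = M a b * N c d := by
    rw [Matrix.mul_apply, Finset.sum_eq_single c (fun j _ hj => by simp [hj]) (by simp)]
    simp
  exact ⟨Matrix.single b c (1 : R), fun h => mul_ne_zero hab hcd (by simpa [h] using hentry.symm)⟩

namespace IsReedy

variable {k : Type*} [Field k] {A : Type*} [Ring A] [Algebra k A]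
  {ι : Type*} [Fintype ι] [DecidableEq ι] {e : ι → A} {deg : ι → ℕ} {Ap Am : Subalgebra k A}

theorem completeOrthogonalIdempotents (h : IsReedy k e deg Ap Am) :
    CompleteOrthogonalIdempotents e where
  idem := h.idem
  ortho _ _ hij := h.orth _ _ hij
  complete := h.complete

theorem ne_zero (h : IsReedy k e deg Ap Am) (i : ι) : e i ≠ 0 := by
  intro hi
  have hbot : cornerSpace k (e i) (e i) (Ap : Set A) = ⊥ := by
    simp [cornerSpace, hi]
  have hrank := h.diagP i
  rw [hbot, finrank_bot] at hrank
  exact zero_ne_one hrank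

theorem cornerSpace_plus_eq_bot (h : IsReedy k e deg Ap Am) {i j : ι} (hij : i ≠ j)
    (hdeg : deg j ≤ deg i) : cornerSpace k (e j) (e i) (Ap : Set A) = ⊥ := by
  by_contra hne
  exact absurd (h.offP i j hij hne) (not_lt.mpr hdeg)

theorem cornerSpace_minus_eq_bot (h : IsReedy k e deg Ap Am) {i j : ι} (hij : i ≠ j)
    (hdeg : deg i ≤ deg j) : cornerSpace k (e j) (e i) (Am : Set A) = ⊥ := by
  by_contra hne
  exact absurd (h.offM i j hij hne) (not_lt.mpr hdeg)

variable [FiniteDimensional k A]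

theorem finrank_cornerSpace_univ (h : IsReedy k e deg Ap Am) (i j : ι) :
    Module.finrank k (cornerSpace k (e j) (e i) Set.univ) =
      ∑ l, Module.finrank k (cornerSpace k (e j) (e l) (Ap : Set A)) *
        Module.finrank k (cornerSpace k (e l) (e i) (Am : Set A)) := by
  rw [← h.mul_range i j, LinearMap.finrank_range_of_inj (h.mul_inj i j),
    Module.finrank_directSum]
  exact Finset.sum_congr rfl fun l _ => Module.finrank_tensorProduct

theorem finrank_cornerSpace_univ_eq_minus (h : IsReedy k e deg Ap Am) {a : ι}
    (ha : ∀ l, deg a ≤ deg l) (i : ι) :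
    Module.finrank k (cornerSpace k (e a) (e i) Set.univ) =
      Module.finrank k (cornerSpace k (e a) (e i) (Am : Set A)) := by
  rw [h.finrank_cornerSpace_univ, Finset.sum_eq_single a, h.diagP, one_mul]
  · intro l _ hl
    rw [h.cornerSpace_plus_eq_bot hl (ha l), finrank_bot, zero_mul]
  · simp

theorem finrank_cornerSpace_univ_eq_plus (h : IsReedy k e deg Ap Am) {a : ι}
    (ha : ∀ l, deg a ≤ deg l) (j : ι) :
    Module.finrank k (cornerSpace k (e j) (e a) Set.univ) =
      Module.finrank k (cornerSpace k (e j) (e a) (Ap : Set A)) := by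
  rw [h.finrank_cornerSpace_univ, Finset.sum_eq_single a, h.diagM, mul_one]
  · intro l _ hl
    rw [h.cornerSpace_minus_eq_bot (Ne.symm hl) (ha l), finrank_bot, mul_zero]
  · simp

theorem finrank_eq_sum_mul (h : IsReedy k e deg Ap Am) :
    Module.finrank k A =
      ∑ l, (∑ j, Module.finrank k (cornerSpace k (e j) (e l) (Ap : Set A))) *
        ∑ i, Module.finrank k (cornerSpace k (e l) (e i) (Am : Set A)) := by
  rw [← sum_finrank_cornerSpace_univ h.completeOrthogonalIdempotents, Fintype.sum_prod_type]
  simp_rw [h.finrank_cornerSpace_univ, Finset.sum_mul_sum]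
  exact (Finset.sum_congr rfl fun _ _ => Finset.sum_comm).trans Finset.sum_comm

theorem finrank_eq_one [Unique ι] (h : IsReedy k e deg Ap Am) : Module.finrank k A = 1 := by
  simp [h.finrank_eq_sum_mul, h.diagP, h.diagM]

theorem five_le_finrank (h : IsReedy k e deg Ap Am)
    (hcorner : ∀ i j, cornerSpace k (e j) (e i) Set.univ ≠ ⊥) {a b : ι}
    (ha : ∀ l, deg a ≤ deg l) (hab : a ≠ b) : 5 ≤ Module.finrank k A := by
  set p : ι → ℕ := fun l => ∑ j, Module.finrank k (cornerSpace k (e j) (e l) (Ap : Set A))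
  set m : ι → ℕ := fun l => ∑ i, Module.finrank k (cornerSpace k (e l) (e i) (Am : Set A))
  have hcorner_pos : ∀ i j, 1 ≤ Module.finrank k (cornerSpace k (e j) (e i) Set.univ) :=
    fun i j => Nat.one_le_iff_ne_zero.mpr (mt Submodule.finrank_eq_zero.mp (hcorner i j))
  have add_le_sum (f : ι → ℕ) : f a + f b ≤ ∑ l, f l :=
    Finset.add_le_sum (fun _ _ => Nat.zero_le _) (Finset.mem_univ a) (Finset.mem_univ b) hab
  have two_le_sum (f : ι → ℕ) (hfa : f a = 1) (hfb : 1 ≤ f b) : 2 ≤ ∑ l, f l :=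
    (by omega : 2 ≤ f a + f b).trans (add_le_sum f)
  have one_le_sum (f : ι → ℕ) (hfb : f b = 1) : 1 ≤ ∑ l, f l :=
    hfb.symm.le.trans (Finset.single_le_sum (fun _ _ => Nat.zero_le _) (Finset.mem_univ b))
  have hpa : 2 ≤ p a := two_le_sum _ (h.diagP a)
    (h.finrank_cornerSpace_univ_eq_plus ha b ▸ hcorner_pos a b)
  have hma : 2 ≤ m a := two_le_sum _ (h.diagM a)
    (h.finrank_cornerSpace_univ_eq_minus ha b ▸ hcorner_pos b a)
  have hpb : 1 ≤ p b := one_le_sum _ (h.diagP b)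
  have hmb : 1 ≤ m b := one_le_sum _ (h.diagM b)
  calc 5 ≤ p a * m a + p b * m b := by nlinarith
    _ ≤ ∑ l, p l * m l := add_le_sum fun l => p l * m l
    _ = Module.finrank k A := h.finrank_eq_sum_mul.symm

theorem finrank_eq_one_or_five_le [Nontrivial A] (h : IsReedy k e deg Ap Am)
    (hcorner : ∀ i j, cornerSpace k (e j) (e i) Set.univ ≠ ⊥) :
    Module.finrank k A = 1 ∨ 5 ≤ Module.finrank k A := by
  have : Nonempty ι := by
    by_contra hempty
    rw [not_nonempty_iff] at hempty
    simpa using h.complete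
  obtain ⟨a, ha⟩ := Finite.exists_min deg
  by_cases hsingle : ∀ b, b = a
  · have : Unique ι := ⟨⟨a⟩, hsingle⟩
    exact Or.inl h.finrank_eq_one
  push Not at hsingle
  obtain ⟨b, hba⟩ := hsingle
  exact Or.inr (h.five_le_finrank hcorner ha hba.symm)

end IsReedy

/-- The algebra of `2 × 2` matrices over a field admits no Reedy
decomposition: there is no complete set of pairwise orthogonal idempotents, degree function
and pair of subalgebras satisfying the Reedy axioms. -/
theorem matrix_two_not_reedy (k : Type*) [Field k] :
    ∀ (ι : Type) (_ : Fintype ι) (_ : DecidableEq ι)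
      (e : ι → Matrix (Fin 2) (Fin 2) k) (deg : ι → ℕ)
      (Bp Bm : Subalgebra k (Matrix (Fin 2) (Fin 2) k)),
      ¬ IsReedy k e deg Bp Bm := by
  intro ι _ _ e deg Bp Bm h
  have hcorner : ∀ i j, cornerSpace k (e j) (e i) Set.univ ≠ ⊥ := fun i j hbot => by
    obtain ⟨X, hX⟩ := Matrix.exists_mul_mul_ne_zero (h.ne_zero j) (h.ne_zero i)
    exact hX ((Submodule.mem_bot k).mp (hbot ▸ Submodule.subset_span ⟨X, trivial, rfl⟩))
  have hdim : Module.finrank k (Matrix (Fin 2) (Fin 2) k) = 4 := by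
    simp [Module.finrank_matrix]
  have := h.finrank_eq_one_or_five_le hcorner
  omega
end

section
/- Let (A, A⁺, A⁻) be a Reedy algebra, t the minimal degree occurring, and ε_t the sum of all idempotents in E of degree t. Then the multiplication map A⁺ε_t ⊗_{S_t} ε_t A⁻ → A ε_t A is an isomorphism of A⁺–A⁻-bimodules, where S_t = ∏_{deg(eᵢ)=t} k eᵢ. -/
open scoped TensorProduct DirectSum

/-! Every summand `A⁺eₗ ⊗ eₗA⁻` splits, via the complete set of idempotents, into the pieces
`eⱼA⁺eₗ ⊗ eₗA⁻eᵢ`, and on the `(j, i)` pieces the multiplication map is one of the injective maps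
`⊕ₗ eⱼA⁺eₗ ⊗ eₗA⁻eᵢ → eⱼAeᵢ` of the Reedy axioms; this gives injectivity for any set of
idempotents. For the range, minimality of the degree kills `eₘA⁻eₗ` for `m ≠ l` and leaves
`eₗA⁻eₗ = k eₗ`, so the Reedy factorisation of `eⱼAeₗ` shows `Aeₗ = A⁺eₗ`; dually `eₗA = eₗA⁻`. -/

theorem DirectSum.range_toModule {R ι N : Type*} [Semiring R] [DecidableEq ι] {M : ι → Type*}
    [∀ i, AddCommMonoid (M i)] [∀ i, Module R (M i)] [AddCommMonoid N] [Module R N]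
    (φ : ∀ i, M i →ₗ[R] N) :
    LinearMap.range (DirectSum.toModule R ι N φ) = ⨆ i, LinearMap.range (φ i) := by
  refine le_antisymm ?_ (iSup_le fun i => ?_)
  · rintro _ ⟨y, rfl⟩
    induction y using DirectSum.induction_on with
    | zero => simp
    | of i x =>
      rw [← DirectSum.lof_eq_of R, DirectSum.toModule_lof]
      exact Submodule.mem_iSup_of_mem i ⟨x, rfl⟩
    | add y z hy hz => rw [map_add]; exact add_mem hy hz
  · rintro _ ⟨x, rfl⟩
    exact ⟨DirectSum.lof R ι M i x, DirectSum.toModule_lof R i x⟩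

theorem DirectSum.toModule_lof_comp_apply {R ι κ : Type*} [Semiring R] [DecidableEq ι]
    [DecidableEq κ] {M : ι → Type*} [∀ i, AddCommMonoid (M i)] [∀ i, Module R (M i)]
    {N : κ → Type*} [∀ l, AddCommMonoid (N l)] [∀ l, Module R (N l)]
    {σ : κ → ι} (hσ : σ.Injective) (f : ∀ l, N l →ₗ[R] M (σ l)) (y : ⨁ l, N l) (l : κ) :
    DirectSum.toModule R κ (⨁ i, M i) (fun l => DirectSum.lof R ι M (σ l) ∘ₗ f l) y (σ l)
      = f l (y l) := by
  induction y using DirectSum.induction_on with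
  | zero => simp
  | of l' x =>
    rw [← DirectSum.lof_eq_of R, DirectSum.toModule_lof, LinearMap.comp_apply]
    by_cases hl : l' = l
    · subst hl
      simp [DirectSum.lof_eq_of]
    · rw [DirectSum.lof_eq_of, DirectSum.lof_eq_of, DirectSum.of_eq_of_ne _ _ _ (hσ.ne hl).symm,
        DirectSum.of_eq_of_ne _ _ _ (Ne.symm hl), map_zero]
  | add y z hy hz => simp only [map_add, DirectSum.add_apply, hy, hz]

theorem TensorProduct.eq_of_forall_map_eq {R M N : Type*} [CommSemiring R]
    [AddCommMonoid M] [AddCommMonoid N] [Module R M] [Module R N] {ι κ : Type*} [Fintype ι]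
    [Fintype κ] {M' : ι → Type*} {N' : κ → Type*} [∀ i, AddCommMonoid (M' i)]
    [∀ i, Module R (M' i)] [∀ j, AddCommMonoid (N' j)] [∀ j, Module R (N' j)]
    (f : ∀ i, M →ₗ[R] M' i) (f' : ∀ i, M' i →ₗ[R] M) (hf : ∑ i, f' i ∘ₗ f i = LinearMap.id)
    (g : ∀ j, N →ₗ[R] N' j) (g' : ∀ j, N' j →ₗ[R] N) (hg : ∑ j, g' j ∘ₗ g j = LinearMap.id)
    {x y : M ⊗[R] N}
    (hxy : ∀ i j, TensorProduct.map (f i) (g j) x = TensorProduct.map (f i) (g j) y) : x = y := by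
  have hdecomp : ∀ z : M ⊗[R] N,
      z = ∑ i, ∑ j, TensorProduct.map (f' i) (g' j) (TensorProduct.map (f i) (g j) z) := by
    intro z
    calc z = TensorProduct.map (∑ i, f' i ∘ₗ f i) (∑ j, g' j ∘ₗ g j) z := by
          rw [hf, hg, TensorProduct.map_id, LinearMap.id_apply]
      _ = _ := by
          simp only [← TensorProduct.mapBilinear_apply, map_sum, LinearMap.sum_apply]
          rw [Finset.sum_comm]
          simp only [TensorProduct.mapBilinear_apply, TensorProduct.map_comp, LinearMap.comp_apply]
  rw [hdecomp x, hdecomp y]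
  simp only [hxy]

section cornerSpace

variable {k : Type*} [Field k] {A : Type*} [Ring A] [Algebra k A] {S : Set A} {f g x : A}

theorem mem_cornerSpace {a : A} (ha : a ∈ S) : f * a * g ∈ cornerSpace k f g S :=
  Submodule.subset_span ⟨a, ha, rfl⟩

theorem mul_mem_cornerSpace_one_left (f : A) (hx : x ∈ cornerSpace k 1 g S) :
    f * x ∈ cornerSpace k f g S := by
  induction hx using Submodule.span_induction with
  | mem x hx =>
    obtain ⟨a, ha, rfl⟩ := hx
    simpa [mul_assoc] using mem_cornerSpace (k := k) (f := f) (g := g) ha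
  | zero => simp
  | add x y _ _ hx hy => rw [mul_add]; exact add_mem hx hy
  | smul c x _ hx => rw [mul_smul_comm]; exact Submodule.smul_mem _ c hx

theorem mul_mem_cornerSpace_one_right (g : A) (hx : x ∈ cornerSpace k f 1 S) :
    x * g ∈ cornerSpace k f g S := by
  induction hx using Submodule.span_induction with
  | mem x hx =>
    obtain ⟨a, ha, rfl⟩ := hx
    simpa using mem_cornerSpace (k := k) (f := f) (g := g) ha
  | zero => simp
  | add x y _ _ hx hy => rw [add_mul]; exact add_mem hx hy
  | smul c x _ hx => rw [smul_mul_assoc]; exact Submodule.smul_mem _ c hx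

theorem IsIdempotentElem.mul_of_mem_cornerSpace_left (hf : IsIdempotentElem f)
    (hx : x ∈ cornerSpace k f g S) : f * x = x := by
  induction hx using Submodule.span_induction with
  | mem x hx => obtain ⟨a, -, rfl⟩ := hx; rw [← mul_assoc, ← mul_assoc, hf.eq]
  | zero => simp
  | add x y _ _ hx hy => rw [mul_add, hx, hy]
  | smul c x _ hx => rw [mul_smul_comm, hx]

theorem IsIdempotentElem.mul_of_mem_cornerSpace_right (hg : IsIdempotentElem g)
    (hx : x ∈ cornerSpace k f g S) : x * g = x := by
  induction hx using Submodule.span_induction with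
  | mem x hx => obtain ⟨a, -, rfl⟩ := hx; rw [mul_assoc, hg.eq]
  | zero => simp
  | add x y _ _ hx hy => rw [add_mul, hx, hy]
  | smul c x _ hx => rw [smul_mul_assoc, hx]

theorem cornerSpace_le_one_left {P : Subalgebra k A} (hf : f ∈ P) :
    cornerSpace k f g (P : Set A) ≤ cornerSpace k 1 g (P : Set A) :=
  Submodule.span_le.mpr fun _ ⟨a, ha, hx⟩ =>
    hx ▸ by simpa using mem_cornerSpace (k := k) (f := 1) (g := g) (P.mul_mem hf ha)

theorem cornerSpace_le_one_right {P : Subalgebra k A} (hg : g ∈ P) :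
    cornerSpace k f g (P : Set A) ≤ cornerSpace k f 1 (P : Set A) :=
  Submodule.span_le.mpr fun _ ⟨a, ha, hx⟩ =>
    hx ▸ by simpa [mul_assoc] using mem_cornerSpace (k := k) (f := f) (g := 1) (P.mul_mem ha hg)

theorem cornerSpace_self_eq_span_singleton {P : Subalgebra k A} (hf : IsIdempotentElem f)
    (hfP : f ∈ P) (hrank : Module.finrank k (cornerSpace k f f (P : Set A)) = 1) :
    cornerSpace k f f (P : Set A) = k ∙ f := by
  have hf_mem : f ∈ cornerSpace k f f (P : Set A) := by
    simpa [hf.eq] using mem_cornerSpace (k := k) (f := f) (g := f) hfP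
  refine eq_span_singleton_of_mem_of_finrank_eq_one hrank hf_mem fun hf0 => ?_
  have hbot : cornerSpace k f f (P : Set A) = ⊥ :=
    (Submodule.span_le.mpr <| by rintro _ ⟨a, -, rfl⟩; simp [hf0]).antisymm bot_le
  rw [hbot, finrank_bot] at hrank
  exact zero_ne_one hrank

variable (k S)

noncomputable def cornerMulLeft (f g : A) : cornerSpace k 1 g S →ₗ[k] cornerSpace k f g S :=
  (LinearMap.mulLeft k f).restrict fun _ => mul_mem_cornerSpace_one_left f

noncomputable def cornerMulRight (f g : A) : cornerSpace k f 1 S →ₗ[k] cornerSpace k f g S :=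
  (LinearMap.mulRight k g).restrict fun _ => mul_mem_cornerSpace_one_right g

variable {k S}

@[simp] theorem coe_cornerMulLeft (y : cornerSpace k 1 g S) :
    (cornerMulLeft k S f g y : A) = f * y := rfl

@[simp] theorem coe_cornerMulRight (y : cornerSpace k f 1 S) :
    (cornerMulRight k S f g y : A) = y * g := rfl

theorem sum_inclusion_comp_cornerMulLeft {ι : Type*} [Fintype ι] {P : Subalgebra k A}
    {e : ι → A} (he : ∀ j, e j ∈ P) (hsum : ∑ j, e j = 1) :
    ∑ j, Submodule.inclusion (cornerSpace_le_one_left (g := g) (he j)) ∘ₗ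
      cornerMulLeft k (P : Set A) (e j) g = LinearMap.id := by
  ext y
  simp [← Finset.sum_mul, hsum]

theorem sum_inclusion_comp_cornerMulRight {ι : Type*} [Fintype ι] {P : Subalgebra k A}
    {e : ι → A} (he : ∀ j, e j ∈ P) (hsum : ∑ j, e j = 1) :
    ∑ j, Submodule.inclusion (cornerSpace_le_one_right (f := f) (he j)) ∘ₗ
      cornerMulRight k (P : Set A) f (e j) = LinearMap.id := by
  ext y
  simp [← Finset.mul_sum, hsum]

end cornerSpace

section idempotentMulMap

variable (k : Type*) [Field k] {A : Type*} [Ring A] [Algebra k A] {ι : Type*} [DecidableEq ι]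

noncomputable def idempotentMulMap (e : ι → A) (P M : Set A) (p : ι → Prop) :
    (⨁ l : {l // p l}, cornerSpace k 1 (e l.1) P ⊗[k] cornerSpace k (e l.1) 1 M) →ₗ[k] A :=
  DirectSum.toModule k _ A fun l =>
    mulTensor k (cornerSpace k 1 (e l.1) P) (cornerSpace k (e l.1) 1 M)

noncomputable def peirceComponent (e : ι → A) (P M : Set A) (p : ι → Prop) (j i : ι) :
    (⨁ l : {l // p l}, cornerSpace k 1 (e l.1) P ⊗[k] cornerSpace k (e l.1) 1 M) →ₗ[k]
      ⨁ m : ι, cornerSpace k (e j) (e m) P ⊗[k] cornerSpace k (e m) (e i) M :=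
  DirectSum.toModule k _ _ fun l => DirectSum.lof k ι _ l.1 ∘ₗ
    TensorProduct.map (cornerMulLeft k P (e j) (e l.1)) (cornerMulRight k M (e l.1) (e i))

variable {k}

theorem mulTensor_eq_mulMap (M N : Submodule k A) : mulTensor k M N = M.mulMap N := rfl

theorem reedyMulMap_peirceComponent [Fintype ι] (e : ι → A) (P M : Set A) (p : ι → Prop)
    (j i : ι) (y : ⨁ l : {l // p l}, cornerSpace k 1 (e l.1) P ⊗[k] cornerSpace k (e l.1) 1 M) :
    reedyMulMap k e P M j i (peirceComponent k e P M p j i y)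
      = e j * idempotentMulMap k e P M p y * e i := by
  have hmaps : reedyMulMap k e P M j i ∘ₗ peirceComponent k e P M p j i
      = LinearMap.mulRight k (e i) ∘ₗ LinearMap.mulLeft k (e j) ∘ₗ
        idempotentMulMap k e P M p :=
    DirectSum.linearMap_ext k fun l => TensorProduct.ext' fun x y => by
      simp [peirceComponent, idempotentMulMap, reedyMulMap, mulTensor_eq_mulMap, mul_assoc]
  exact LinearMap.congr_fun hmaps y

end idempotentMulMap

namespace IsReedy

variable {k : Type*} [Field k] {A : Type*} [Ring A] [Algebra k A] {ι : Type*} [Fintype ι]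
  [DecidableEq ι] {e : ι → A} {deg : ι → ℕ} {Ap Am : Subalgebra k A}
  (h : IsReedy k e deg Ap Am)
include h

theorem injective_idempotentMulMap (p : ι → Prop) :
    Function.Injective (idempotentMulMap k e Ap Am p) := by
  intro y z hyz
  refine DFinsupp.ext fun l => ?_
  have hcomponent :
      ∀ j i, peirceComponent k e Ap Am p j i y = peirceComponent k e Ap Am p j i z :=
    fun j i => h.mul_inj i j <| by simp only [reedyMulMap_peirceComponent, hyz]
  refine TensorProduct.eq_of_forall_map_eq _ _
    (sum_inclusion_comp_cornerMulLeft h.memP h.complete) _ _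
    (sum_inclusion_comp_cornerMulRight h.memM h.complete) fun j i => ?_
  have hl := congr($(hcomponent j i) l.1)
  rwa [peirceComponent, DirectSum.toModule_lof_comp_apply Subtype.val_injective,
    DirectSum.toModule_lof_comp_apply Subtype.val_injective] at hl

theorem cornerSpace_plus_self (i : ι) : cornerSpace k (e i) (e i) (Ap : Set A) = k ∙ e i :=
  cornerSpace_self_eq_span_singleton (h.idem i) (h.memP i) (h.diagP i)

theorem cornerSpace_minus_self (i : ι) : cornerSpace k (e i) (e i) (Am : Set A) = k ∙ e i :=
  cornerSpace_self_eq_span_singleton (h.idem i) (h.memM i) (h.diagM i)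

theorem cornerSpace_plus_eq_bot_of_minimal {l m : ι} (hl : ∀ i, deg l ≤ deg i) (hm : m ≠ l) :
    cornerSpace k (e l) (e m) (Ap : Set A) = ⊥ := by
  by_contra hne
  exact (h.offP m l hm hne).not_ge (hl m)

theorem cornerSpace_minus_eq_bot_of_minimal {l m : ι} (hl : ∀ i, deg l ≤ deg i) (hm : m ≠ l) :
    cornerSpace k (e m) (e l) (Am : Set A) = ⊥ := by
  by_contra hne
  exact (h.offM l m hm.symm hne).not_ge (hl m)

theorem cornerSpace_univ_eq_iSup (j i : ι) :
    cornerSpace k (e j) (e i) Set.univ =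
      ⨆ m, cornerSpace k (e j) (e m) (Ap : Set A) * cornerSpace k (e m) (e i) (Am : Set A) := by
  rw [← h.mul_range i j, reedyMulMap, DirectSum.range_toModule]
  simp only [mulTensor_eq_mulMap, Submodule.mulMap_range]

theorem mul_mem_cornerSpace_plus_of_minimal {l : ι} (hl : ∀ i, deg l ≤ deg i) (a : A) :
    a * e l ∈ cornerSpace k 1 (e l) (Ap : Set A) := by
  have hsum : a * e l = ∑ j, e j * a * e l := by
    simp_rw [mul_assoc, ← Finset.sum_mul, h.complete, one_mul]
  rw [hsum]
  refine Submodule.sum_mem _ fun j _ => ?_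
  have hj : e j * a * e l ∈ cornerSpace k (e j) (e l) Set.univ := mem_cornerSpace trivial
  rw [h.cornerSpace_univ_eq_iSup] at hj
  refine (iSup_le fun m => ?_ : _ ≤ cornerSpace k 1 (e l) (Ap : Set A)) hj
  rcases eq_or_ne m l with rfl | hm
  · rw [h.cornerSpace_minus_self, Submodule.mul_le]
    intro x hx y hy
    obtain ⟨c, rfl⟩ := Submodule.mem_span_singleton.mp hy
    rw [mul_smul_comm, (h.idem m).mul_of_mem_cornerSpace_right hx]
    exact Submodule.smul_mem _ c (cornerSpace_le_one_left (h.memP j) hx)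
  · rw [h.cornerSpace_minus_eq_bot_of_minimal hl hm, Submodule.mul_bot]
    exact bot_le

theorem mul_mem_cornerSpace_minus_of_minimal {l : ι} (hl : ∀ i, deg l ≤ deg i) (b : A) :
    e l * b ∈ cornerSpace k (e l) 1 (Am : Set A) := by
  have hsum : e l * b = ∑ i, e l * b * e i := by
    rw [← Finset.mul_sum, h.complete, mul_one]
  rw [hsum]
  refine Submodule.sum_mem _ fun i _ => ?_
  have hi : e l * b * e i ∈ cornerSpace k (e l) (e i) Set.univ := mem_cornerSpace trivial
  rw [h.cornerSpace_univ_eq_iSup] at hi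
  refine (iSup_le fun m => ?_ : _ ≤ cornerSpace k (e l) 1 (Am : Set A)) hi
  rcases eq_or_ne m l with rfl | hm
  · rw [h.cornerSpace_plus_self, Submodule.mul_le]
    intro x hx y hy
    obtain ⟨c, rfl⟩ := Submodule.mem_span_singleton.mp hx
    rw [smul_mul_assoc, (h.idem m).mul_of_mem_cornerSpace_left hy]
    exact Submodule.smul_mem _ c (cornerSpace_le_one_right (h.memM i) hy)
  · rw [h.cornerSpace_plus_eq_bot_of_minimal hl hm, Submodule.bot_mul]
    exact bot_le

theorem sum_mul_self {p : ι → Prop} [DecidablePred p] (l : {i // p i}) :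
    (∑ i : {i // p i}, e i.1) * e l.1 = e l.1 := by
  rw [Finset.sum_mul, Finset.sum_eq_single l
    (fun i _ hi => h.orth _ _ (Subtype.val_injective.ne hi)) (by simp), (h.idem l).eq]

theorem range_idempotentMulMap_of_minimal {p : ι → Prop} [DecidablePred p]
    (hp : ∀ l, p l → ∀ i, deg l ≤ deg i) :
    LinearMap.range (idempotentMulMap k e Ap Am p)
      = Submodule.span k {x | ∃ a b : A, x = a * (∑ i : {i // p i}, e i.1) * b} := by
  rw [idempotentMulMap, DirectSum.range_toModule]
  simp only [mulTensor_eq_mulMap, Submodule.mulMap_range]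
  refine le_antisymm (iSup_le fun l => Submodule.mul_le.mpr fun x _ y hy => ?_)
    (Submodule.span_le.mpr ?_)
  · have hy_fixed : (∑ i : {i // p i}, e i.1) * y = y := by
      rw [← (h.idem l).mul_of_mem_cornerSpace_left hy, ← mul_assoc, h.sum_mul_self]
    exact Submodule.subset_span ⟨x, y, by rw [mul_assoc, hy_fixed]⟩
  · rintro _ ⟨a, b, rfl⟩
    rw [Finset.mul_sum, Finset.sum_mul]
    refine Submodule.sum_mem _ fun l _ => Submodule.mem_iSup_of_mem l ?_
    rw [show a * e l * b = a * e l * (e l * b) by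
      rw [← mul_assoc, mul_assoc a (e l) (e l), (h.idem l).eq]]
    exact Submodule.mul_mem_mul (h.mul_mem_cornerSpace_plus_of_minimal (hp l l.2) a)
      (h.mul_mem_cornerSpace_minus_of_minimal (hp l l.2) b)

end IsReedy

theorem reedy_bottom_heredity_decomposition_general
    (k : Type*) [Field k] (A : Type*) [Ring A] [Algebra k A]
    {ι : Type*} [Fintype ι] [DecidableEq ι]
    (e : ι → A) (deg : ι → ℕ) (Ap Am : Subalgebra k A)
    (h : IsReedy k e deg Ap Am)
    (t : ℕ) (ht_le : ∀ i, t ≤ deg i) :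
    Function.Injective (DirectSum.toModule k {i : ι // deg i = t} A fun l =>
      mulTensor k (cornerSpace k 1 (e l.1) (Ap : Set A))
        (cornerSpace k (e l.1) 1 (Am : Set A))) ∧
    LinearMap.range (DirectSum.toModule k {i : ι // deg i = t} A fun l =>
      mulTensor k (cornerSpace k 1 (e l.1) (Ap : Set A))
        (cornerSpace k (e l.1) 1 (Am : Set A)))
      = Submodule.span k
          {x | ∃ a b : A, x = a * (∑ i : {i : ι // deg i = t}, e i.1) * b} :=
  ⟨h.injective_idempotentMulMap _,
    h.range_idempotentMulMap_of_minimal fun _ hl i => hl ▸ ht_le i⟩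

/-- Let `(A, A⁺, A⁻)` be Reedy, `t` the minimal occurring degree and
`ε_t` the sum of the degree-`t` idempotents. Multiplication induces an isomorphism
`A⁺ε_t ⊗_{S_t} ε_tA⁻ ≅ Aε_tA`; since `S_t = ∏_{deg eᵢ = t} k eᵢ`, this tensor product
decomposes as `⊕_{deg eᵢ = t} A⁺eᵢ ⊗ₖ eᵢA⁻`, and the multiplication map from the latter
to `Aε_tA` is bijective (hence an isomorphism of `A⁺`–`A⁻`-bimodules). -/
theorem reedy_bottom_heredity_decomposition
    (k : Type*) [Field k] (A : Type*) [Ring A] [Algebra k A] [FiniteDimensional k A]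
    {ι : Type*} [Fintype ι] [DecidableEq ι]
    (e : ι → A) (deg : ι → ℕ) (Ap Am : Subalgebra k A)
    (h : IsReedy k e deg Ap Am)
    (t : ℕ) (ht_le : ∀ i, t ≤ deg i) (ht_ex : ∃ i, deg i = t) :
    Function.Injective (DirectSum.toModule k {i : ι // deg i = t} A fun l =>
      mulTensor k (cornerSpace k 1 (e l.1) (Ap : Set A))
        (cornerSpace k (e l.1) 1 (Am : Set A))) ∧
    LinearMap.range (DirectSum.toModule k {i : ι // deg i = t} A fun l =>
      mulTensor k (cornerSpace k 1 (e l.1) (Ap : Set A))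
        (cornerSpace k (e l.1) 1 (Am : Set A)))
      = Submodule.span k
          {x | ∃ a b : A, x = a * (∑ i : {i : ι // deg i = t}, e i.1) * b} :=
  reedy_bottom_heredity_decomposition_general k A e deg Ap Am h t ht_le
end

section
/- Let J = AeA be a heredity ideal of a finite-dimensional algebra A generated by an idempotent e. Then the multiplication map Ae ⊗_{eAe} eA → AeA is an isomorphism. -/
open scoped TensorProduct DirectSum

variable (k : Type*) [Field k] {A : Type*} [Ring A] [Algebra k A]

/-- The subspace `Ae` of an algebra `A`. -/
def rightMulSpace (e : A) : Submodule k A := Submodule.span k {x | ∃ a : A, x = a * e}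

/-- The subspace `eA` of an algebra `A`. -/
def leftMulSpace (e : A) : Submodule k A := Submodule.span k {x | ∃ b : A, x = e * b}

theorem mem_rightMulSpace (e a : A) : a * e ∈ rightMulSpace k e :=
  Submodule.subset_span ⟨a, rfl⟩

theorem mem_leftMulSpace (e b : A) : e * b ∈ leftMulSpace k e :=
  Submodule.subset_span ⟨b, rfl⟩

/-!
Since `J = AeA` is a projective left `A`-module, the surjection from the free module on the
generators `e * b` onto `J` has an `A`-linear section `σ`. The map
`x ↦ ∑_b σ(x)_b e ⊗ e b` from `J` to `Ae ⊗ eA` inverts multiplication up to balanced relations: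
by `A`-linearity of `σ`, the image of `u * v` is `∑_b u σ(v)_b e ⊗ e b`, and each summand
differs from `u ⊗ e σ(v)_b e b` by a balanced relation, while these sum to `u ⊗ v`.
-/

theorem Module.Projective.exists_linearCombination_rightInverse {R M ι : Type*} [Ring R]
    [AddCommGroup M] [Module R M] (v : ι → M) (P : Submodule R M) [Module.Projective R P]
    (hP : P = Submodule.span R (Set.range v)) :
    ∃ σ : P →ₗ[R] (ι →₀ R), ∀ x : P, Finsupp.linearCombination R v (σ x) = x := by
  have hv : ∀ y, Finsupp.linearCombination R v y ∈ P := fun y => by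
    rw [hP, ← Finsupp.range_linearCombination]; exact LinearMap.mem_range_self _ y
  have hsurj : Function.Surjective ((Finsupp.linearCombination R v).codRestrict P hv) := by
    rintro ⟨x, hx⟩
    rw [hP, ← Finsupp.range_linearCombination] at hx
    obtain ⟨y, rfl⟩ := hx
    exact ⟨y, rfl⟩
  obtain ⟨σ, hσ⟩ := Module.projective_lifting_property _ LinearMap.id hsurj
  exact ⟨σ, fun x => congrArg Subtype.val (LinearMap.congr_fun hσ x)⟩

variable {k} {e : A}

theorem mem_rightMulSpace_iff (he : IsIdempotentElem e) {u : A} :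
    u ∈ rightMulSpace k e ↔ u * e = u := by
  refine ⟨fun hu => ?_, fun hu => hu ▸ mem_rightMulSpace k e u⟩
  induction hu using Submodule.span_induction with
  | mem x hx => obtain ⟨a, rfl⟩ := hx; exact he.mul_mul_self a
  | zero => exact zero_mul e
  | add x y _ _ hx hy => rw [add_mul, hx, hy]
  | smul c x _ hx => rw [smul_mul_assoc, hx]

theorem mem_leftMulSpace_iff (he : IsIdempotentElem e) {v : A} :
    v ∈ leftMulSpace k e ↔ e * v = v := by
  refine ⟨fun hv => ?_, fun hv => hv ▸ mem_leftMulSpace k e v⟩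
  induction hv using Submodule.span_induction with
  | mem x hx => obtain ⟨b, rfl⟩ := hx; exact he.mul_self_mul b
  | zero => exact mul_zero e
  | add x y _ _ hx hy => rw [mul_add, hx, hy]
  | smul c x _ hx => rw [mul_smul_comm, hx]

theorem mulTensor_tmul (M N : Submodule k A) (u : M) (v : N) :
    mulTensor k M N (u ⊗ₜ[k] v) = (u : A) * (v : A) := rfl

variable (k e)

def toRightMulSpace : A →ₗ[k] rightMulSpace k e :=
  (LinearMap.mulRight k e).codRestrict _ (mem_rightMulSpace k e)

def toLeftMulSpace : A →ₗ[k] leftMulSpace k e :=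
  (LinearMap.mulLeft k e).codRestrict _ (mem_leftMulSpace k e)

@[simp] theorem coe_toRightMulSpace (a : A) : (toRightMulSpace k e a : A) = a * e := rfl

@[simp] theorem coe_toLeftMulSpace (b : A) : (toLeftMulSpace k e b : A) = e * b := rfl

def balancedSubmodule : Submodule k (rightMulSpace k e ⊗[k] leftMulSpace k e) :=
  Submodule.span k {z | ∃ a x b : A,
    z = toRightMulSpace k e (a * e * x) ⊗ₜ[k] toLeftMulSpace k e b
      - toRightMulSpace k e a ⊗ₜ[k] toLeftMulSpace k e (x * (e * b))}

noncomputable def balancedLift : (A →₀ A) →ₗ[k] rightMulSpace k e ⊗[k] leftMulSpace k e :=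
  Finsupp.lsum k fun b => (TensorProduct.mk k _ _).flip (toLeftMulSpace k e b) ∘ₗ toRightMulSpace k e

theorem balancedLift_single (b c : A) :
    balancedLift k e (Finsupp.single b c) = toRightMulSpace k e c ⊗ₜ toLeftMulSpace k e b :=
  Finsupp.lsum_single k _ b c

theorem balancedLift_smul_sub_mem (a : A) (y : A →₀ A) :
    balancedLift k e ((a * e) • y) - toRightMulSpace k e a
      ⊗ₜ toLeftMulSpace k e (Finsupp.linearCombination A (e * ·) y) ∈ balancedSubmodule k e := by
  induction y using Finsupp.induction_linear with
  | zero => simp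
  | add f g hf hg =>
    convert add_mem hf hg using 1
    rw [smul_add, map_add, map_add, map_add, TensorProduct.tmul_add]
    abel
  | single b c =>
    rw [Finsupp.smul_single, smul_eq_mul, balancedLift_single, Finsupp.linearCombination_single,
      smul_eq_mul]
    exact Submodule.subset_span ⟨a, c, b, rfl⟩

variable {e}

theorem range_mulTensor_eq_span (he : IsIdempotentElem e) :
    LinearMap.range (mulTensor k (rightMulSpace k e) (leftMulSpace k e))
      = Submodule.span k {x | ∃ a b : A, x = a * e * b} := by
  apply le_antisymm
  · rintro _ ⟨t, rfl⟩
    induction t using TensorProduct.induction_on with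
    | zero => exact zero_mem _
    | tmul u v =>
      refine Submodule.subset_span ⟨u, v, ?_⟩
      rw [mulTensor_tmul, (mem_rightMulSpace_iff he).1 u.2]
    | add x y hx hy => rw [map_add]; exact add_mem hx hy
  · rw [Submodule.span_le]
    rintro _ ⟨a, b, rfl⟩
    refine ⟨toRightMulSpace k e a ⊗ₜ toLeftMulSpace k e b, ?_⟩
    rw [mulTensor_tmul, coe_toRightMulSpace, coe_toLeftMulSpace, mul_assoc a, he.mul_self_mul,
      ← mul_assoc]

theorem balancedSubmodule_le_ker (he : IsIdempotentElem e) :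
    balancedSubmodule k e ≤ LinearMap.ker (mulTensor k (rightMulSpace k e) (leftMulSpace k e)) := by
  rw [balancedSubmodule, Submodule.span_le]
  rintro _ ⟨a, x, b, rfl⟩
  rw [SetLike.mem_coe, LinearMap.mem_ker, map_sub, mulTensor_tmul, mulTensor_tmul, sub_eq_zero]
  simp only [coe_toRightMulSpace, coe_toLeftMulSpace, mul_assoc, he.mul_self_mul]

theorem balancedLift_smul_sub_tmul_mem (he : IsIdempotentElem e) (u : rightMulSpace k e)
    (v : leftMulSpace k e) {y : A →₀ A} (hy : Finsupp.linearCombination A (e * ·) y = v) :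
    balancedLift k e ((u : A) • y) - u ⊗ₜ v ∈ balancedSubmodule k e := by
  have hu : (u : A) * e = u := (mem_rightMulSpace_iff he).1 u.2
  have hv : e * (v : A) = v := (mem_leftMulSpace_iff he).1 v.2
  convert balancedLift_smul_sub_mem k e u y using 2
  · rw [hu]
  · congr 1
    · exact Subtype.ext hu.symm
    · exact Subtype.ext (by rw [hy, coe_toLeftMulSpace, hv])

theorem mulTensor_mem_of_mul_mem {J : Submodule A A} (he : IsIdempotentElem e)
    (hJ : ∀ b, e * b ∈ J) (t : rightMulSpace k e ⊗[k] leftMulSpace k e) :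
    mulTensor k (rightMulSpace k e) (leftMulSpace k e) t ∈ J := by
  induction t using TensorProduct.induction_on with
  | zero => rw [map_zero]; exact zero_mem J
  | tmul u v =>
    rw [mulTensor_tmul, ← (mem_leftMulSpace_iff he).1 v.2]
    exact J.smul_mem (u : A) (hJ v)
  | add x y hx hy => rw [map_add]; exact add_mem hx hy

theorem ker_mulTensor_le_balancedSubmodule (he : IsIdempotentElem e) (J : Submodule A A)
    [Module.Projective A J] (hJ : J = Submodule.span A {x | ∃ b : A, x = e * b}) :
    LinearMap.ker (mulTensor k (rightMulSpace k e) (leftMulSpace k e)) ≤ balancedSubmodule k e := by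
  have hJ' : J = Submodule.span A (Set.range (e * ·)) := by
    rw [hJ]; congr 1; ext x; exact exists_congr fun b => eq_comm
  obtain ⟨σ, hσ⟩ := Module.Projective.exists_linearCombination_rightInverse _ J hJ'
  have hgen : ∀ b, e * b ∈ J := fun b => hJ' ▸ Submodule.subset_span ⟨b, rfl⟩
  set μ := mulTensor k (rightMulSpace k e) (leftMulSpace k e)
  let ν (t) : J := ⟨μ t, mulTensor_mem_of_mul_mem k he hgen t⟩
  have lift_sub_mem : ∀ t, balancedLift k e (σ (ν t)) - t ∈ balancedSubmodule k e := by
    intro t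
    induction t using TensorProduct.induction_on with
    | zero =>
      have : ν 0 = 0 := Subtype.ext (map_zero μ)
      simp [this]
    | add x y hx hy =>
      have : ν (x + y) = ν x + ν y := Subtype.ext (map_add μ x y)
      convert add_mem hx hy using 1
      rw [this, map_add, map_add]
      abel
    | tmul u v =>
      have hvJ : (v : A) ∈ J := (mem_leftMulSpace_iff he).1 v.2 ▸ hgen v
      have hν : ν (u ⊗ₜ v) = (u : A) • ⟨(v : A), hvJ⟩ := rfl
      rw [hν, map_smul]
      exact balancedLift_smul_sub_tmul_mem k he u v (hσ _)
  intro t ht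
  have h0 : ν t = 0 := Subtype.ext ht
  have hneg := lift_sub_mem t
  rw [h0, map_zero, map_zero, zero_sub (G := rightMulSpace k e ⊗[k] leftMulSpace k e)] at hneg
  exact ((balancedSubmodule k e).neg_mem_iff (x := t)).1 hneg

open scoped Pointwise in
theorem heredity_ideal_balanced_multiplication
    (e : A) (he : IsIdempotentElem e) (J : Ideal A)
    (hJ : J = Submodule.span A {x | ∃ b : A, x = e * b})
    (hproj : Module.Projective A J) :
    LinearMap.range (mulTensor k (rightMulSpace k e) (leftMulSpace k e))
      = Submodule.span k {x | ∃ a b : A, x = a * e * b} ∧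
    LinearMap.ker (mulTensor k (rightMulSpace k e) (leftMulSpace k e))
      = Submodule.span k {z : ↥(rightMulSpace k e) ⊗[k] ↥(leftMulSpace k e) |
          ∃ a x b : A,
            z = (⟨a * e * x * e, mem_rightMulSpace k e (a * e * x)⟩ : rightMulSpace k e)
                  ⊗ₜ[k] (⟨e * b, mem_leftMulSpace k e b⟩ : leftMulSpace k e)
              - (⟨a * e, mem_rightMulSpace k e a⟩ : rightMulSpace k e)
                  ⊗ₜ[k] (⟨e * (x * (e * b)), mem_leftMulSpace k e (x * (e * b))⟩ :
                    leftMulSpace k e)} :=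
  ⟨range_mulTensor_eq_span k he,
    le_antisymm (ker_mulTensor_le_balancedSubmodule k he J hJ) (balancedSubmodule_le_ker k he)⟩
end
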